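/- arXiv:2504.01970 — 5 statements merged into one kernel-verified Lean document; each statement's English description precedes it below -/
import Mathlib

section
/- If the DC-OPF feasible set is nonempty, then the infimum of the objective J over the DC-feasible set is attained: there exists a DC-feasible point (p^g*, p^f*, θ*, φ*) with J(p^g*, φ*) ≤ J(p^g, φ) for every DC-feasible point (p^g, p^f, θ, φ). (In fact, given any DC-feasible point, replacing each p^g(g) by p̲(g) if c(g) ≥ c_φ and by p̄(g) if c(g) < c_φ, and adjusting φ by the nodal power balance, yields a minimizer.) -/
open Finset

/-- DC-OPF primal feasibility. -/
def DCFeasible {N E G L : Type*} [Fintype E] [Fintype G] [Fintype L] [DecidableEq N]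
    (src dst : E → N) (busG : G → N) (busL : L → N) (r : N)
    (pd : L → ℝ) (gs : N → ℝ) (b : E → ℝ)
    (pmin pmax : G → ℝ) (Δmin Δmax : E → ℝ) (Smax : E → ℝ)
    (pg : G → ℝ) (pf : E → ℝ) (θ : N → ℝ) (φ : N → ℝ) : Prop :=
  (∀ i : N,
      (∑ g ∈ univ.filter (fun g => busG g = i), pg g)
        - (∑ e ∈ univ.filter (fun e => src e = i), pf e)
        + (∑ e ∈ univ.filter (fun e => dst e = i), pf e)
        + φ i
      = (∑ l ∈ univ.filter (fun l => busL l = i), pd l) + gs i)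
  ∧ (∀ e : E, pf e = - b e * (θ (src e) - θ (dst e)))
  ∧ (∀ e : E, Δmin e ≤ θ (src e) - θ (dst e) ∧ θ (src e) - θ (dst e) ≤ Δmax e)
  ∧ (∀ e : E, - Smax e ≤ pf e ∧ pf e ≤ Smax e)
  ∧ θ r = 0
  ∧ (∀ g : G, pmin g ≤ pg g ∧ pg g ≤ pmax g)

/-- DC-OPF objective. -/
def DCObj {N G : Type*} [Fintype N] [Fintype G]
    (c : G → ℝ) (cφ : ℝ) (pg : G → ℝ) (φ : N → ℝ) : ℝ :=
  cφ * (∑ i : N, φ i) + ∑ g : G, c g * pg g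

/-- if the DC-OPF feasible set is nonempty, the infimum of the objective
over the feasible set is attained. -/
theorem dcopf_minimizer_exists
    {N E G L : Type*} [Fintype N] [Fintype E] [Fintype G] [Fintype L] [DecidableEq N]
    (src dst : E → N) (busG : G → N) (busL : L → N) (r : N)
    (pd : L → ℝ) (gs : N → ℝ) (b : E → ℝ)
    (pmin pmax : G → ℝ) (Δmin Δmax : E → ℝ) (Smax : E → ℝ)
    (c : G → ℝ) (cφ : ℝ)
    (hne : ∃ (pg : G → ℝ) (pf : E → ℝ) (θ : N → ℝ) (φ : N → ℝ),
      DCFeasible src dst busG busL r pd gs b pmin pmax Δmin Δmax Smax pg pf θ φ) :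
    ∃ (pgs : G → ℝ) (pfs : E → ℝ) (θs : N → ℝ) (φs : N → ℝ),
      DCFeasible src dst busG busL r pd gs b pmin pmax Δmin Δmax Smax pgs pfs θs φs
      ∧ ∀ (pg : G → ℝ) (pf : E → ℝ) (θ : N → ℝ) (φ : N → ℝ),
          DCFeasible src dst busG busL r pd gs b pmin pmax Δmin Δmax Smax pg pf θ φ →
          DCObj c cφ pgs φs ≤ DCObj c cφ pg φ := by
  classical
  obtain ⟨pg0, pf0, θ0, φ0, h0⟩ := hne
  set D : ℝ := (∑ l : L, pd l) + ∑ i : N, gs i with hD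
  -- key: for any feasible point, ∑ φ = D - ∑ pg
  have key : ∀ (pg : G → ℝ) (pf : E → ℝ) (θ : N → ℝ) (φ : N → ℝ),
      DCFeasible src dst busG busL r pd gs b pmin pmax Δmin Δmax Smax pg pf θ φ →
      (∑ i : N, φ i) = D - ∑ g : G, pg g := by
    intro pg pf θ φ hf
    have hbal := hf.1
    have hsum : ∑ i : N,
        ((∑ g ∈ univ.filter (fun g => busG g = i), pg g)
          - (∑ e ∈ univ.filter (fun e => src e = i), pf e)
          + (∑ e ∈ univ.filter (fun e => dst e = i), pf e)
          + φ i)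
        = ∑ i : N, ((∑ l ∈ univ.filter (fun l => busL l = i), pd l) + gs i) :=
      Finset.sum_congr rfl fun i _ => hbal i
    have h1 : ∑ i : N, ∑ g ∈ univ.filter (fun g => busG g = i), pg g = ∑ g : G, pg g :=
      Finset.sum_fiberwise _ _ _
    have h2 : ∑ i : N, ∑ e ∈ univ.filter (fun e => src e = i), pf e = ∑ e : E, pf e :=
      Finset.sum_fiberwise _ _ _
    have h3 : ∑ i : N, ∑ e ∈ univ.filter (fun e => dst e = i), pf e = ∑ e : E, pf e :=
      Finset.sum_fiberwise _ _ _
    have h4 : ∑ i : N, ∑ l ∈ univ.filter (fun l => busL l = i), pd l = ∑ l : L, pd l :=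
      Finset.sum_fiberwise _ _ _
    simp only [Finset.sum_add_distrib, Finset.sum_sub_distrib, h1, h2, h3, h4] at hsum
    rw [hD]; linarith
  -- optimal generation
  set pgs : G → ℝ := fun g => if cφ ≤ c g then pmin g else pmax g with hpgs
  set φs : N → ℝ := fun i => φ0 i + ∑ g ∈ univ.filter (fun g => busG g = i), (pg0 g - pgs g)
    with hφs
  obtain ⟨hbal0, hflow0, hang0, hS0, hr0, hgen0⟩ := h0
  have hfeas : DCFeasible src dst busG busL r pd gs b pmin pmax Δmin Δmax Smax pgs pf0 θ0 φs := by
    refine ⟨?_, hflow0, hang0, hS0, hr0, ?_⟩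
    · intro i
      have := hbal0 i
      have hsplit : ∑ g ∈ univ.filter (fun g => busG g = i), (pg0 g - pgs g)
          = (∑ g ∈ univ.filter (fun g => busG g = i), pg0 g)
            - ∑ g ∈ univ.filter (fun g => busG g = i), pgs g :=
        Finset.sum_sub_distrib _ _
      simp only [hφs]
      rw [hsplit]
      linarith
    · intro g
      rcases hgen0 g with ⟨h1, h2⟩
      simp only [hpgs]
      split <;> constructor <;> linarith
  refine ⟨pgs, pf0, θ0, φs, hfeas, ?_⟩
  intro pg pf θ φ hf
  have e1 := key pgs pf0 θ0 φs hfeas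
  have e2 := key pg pf θ φ hf
  have hterm : ∀ g : G, (c g - cφ) * pgs g ≤ (c g - cφ) * pg g := by
    intro g
    rcases hf.2.2.2.2.2 g with ⟨h1, h2⟩
    simp only [hpgs]
    split_ifs with h
    · nlinarith
    · nlinarith
  have hsumle : ∑ g : G, (c g - cφ) * pgs g ≤ ∑ g : G, (c g - cφ) * pg g :=
    Finset.sum_le_sum fun g _ => hterm g
  have expand : ∀ pgx : G → ℝ, ∑ g : G, (c g - cφ) * pgx g
      = (∑ g : G, c g * pgx g) - cφ * ∑ g : G, pgx g := by
    intro pgx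
    rw [Finset.mul_sum, ← Finset.sum_sub_distrib]
    exact Finset.sum_congr rfl fun g _ => by ring
  rw [expand, expand] at hsumle
  simp only [DCObj, e1, e2]
  linarith
end

section
/- Weak duality for DC-OPF: for every DC-feasible primal point (p^g, p^f, θ, φ) and every dual-feasible point (λ, λ^pf, ν, μ̲^θ, μ̄^θ, μ̲^pf, μ̄^pf, μ̲^pg, μ̄^pg), the dual objective D is at most the primal objective: D ≤ J(p^g, φ). -/
open Finset

/-- DC-OPF dual feasibility (nonnegativity + stationarity equations). -/
def DCDualFeasible {N E G : Type*} [Fintype E] [DecidableEq N]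
    (src dst : E → N) (busG : G → N) (r : N)
    (b : E → ℝ) (c : G → ℝ) (cφ : ℝ)
    (lam : N → ℝ) (lampf : E → ℝ) (ν : ℝ)
    (μθl μθu μpfl μpfu : E → ℝ) (μpgl μpgu : G → ℝ) : Prop :=
  (∀ e : E, 0 ≤ μθl e) ∧ (∀ e : E, 0 ≤ μθu e)
  ∧ (∀ e : E, 0 ≤ μpfl e) ∧ (∀ e : E, 0 ≤ μpfu e)
  ∧ (∀ g : G, 0 ≤ μpgl g) ∧ (∀ g : G, 0 ≤ μpgu g)
  ∧ (∀ i : N, lam i = cφ)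
  ∧ (∀ g : G, c g - lam (busG g) - μpgl g + μpgu g = 0)
  ∧ (∀ e : E, lam (src e) - lam (dst e) + lampf e - μpfl e + μpfu e = 0)
  ∧ (∀ k : N,
      (∑ e ∈ univ.filter (fun e => src e = k), (b e * lampf e - μθl e + μθu e))
        + (∑ e ∈ univ.filter (fun e => dst e = k), (- b e * lampf e + μθl e - μθu e))
        + (if k = r then ν else 0) = 0)

/-- DC-OPF dual objective. -/
def DCDualObj {N E G L : Type*} [Fintype N] [Fintype E] [Fintype G] [Fintype L]
    [DecidableEq N] (busL : L → N)
    (pd : L → ℝ) (gs : N → ℝ)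
    (pmin pmax : G → ℝ) (Δmin Δmax : E → ℝ) (Smax : E → ℝ)
    (lam : N → ℝ)
    (μθl μθu μpfl μpfu : E → ℝ) (μpgl μpgu : G → ℝ) : ℝ :=
  (∑ i : N, lam i * ((∑ l ∈ univ.filter (fun l => busL l = i), pd l) + gs i))
  + (∑ e : E, (μθl e * Δmin e - μθu e * Δmax e))
  - (∑ e : E, Smax e * (μpfl e + μpfu e))
  + (∑ g : G, (μpgl g * pmin g - μpgu g * pmax g))

/-- Complementary slackness between a primal and dual point. -/
def DCCompSlack {N E G : Type*}
    (src dst : E → N)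
    (pmin pmax : G → ℝ) (Δmin Δmax : E → ℝ) (Smax : E → ℝ)
    (pg : G → ℝ) (pf : E → ℝ) (θ : N → ℝ)
    (μθl μθu μpfl μpfu : E → ℝ) (μpgl μpgu : G → ℝ) : Prop :=
  (∀ g : G, μpgl g * (pg g - pmin g) = 0)
  ∧ (∀ g : G, μpgu g * (pmax g - pg g) = 0)
  ∧ (∀ e : E, μpfl e * (pf e + Smax e) = 0)
  ∧ (∀ e : E, μpfu e * (Smax e - pf e) = 0)
  ∧ (∀ e : E, μθl e * ((θ (src e) - θ (dst e)) - Δmin e) = 0)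
  ∧ (∀ e : E, μθu e * (Δmax e - (θ (src e) - θ (dst e))) = 0)


private lemma dcopf_fib {X M : Type*} [Fintype X] [Fintype M] [DecidableEq M]
    (f : X → M) (w : M → ℝ) (h : X → ℝ) :
    ∑ i : M, w i * ∑ x ∈ univ.filter (fun x => f x = i), h x
      = ∑ x : X, w (f x) * h x := by
  rw [← Finset.sum_fiberwise univ f (fun x => w (f x) * h x)]
  refine Finset.sum_congr rfl fun i _ => ?_
  rw [Finset.mul_sum]
  refine Finset.sum_congr rfl fun x hx => ?_
  rw [(Finset.mem_filter.mp hx).2]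

/-- weak duality for DC-OPF. -/
theorem dcopf_weak_duality
    {N E G L : Type*} [Fintype N] [Fintype E] [Fintype G] [Fintype L] [DecidableEq N]
    (src dst : E → N) (busG : G → N) (busL : L → N) (r : N)
    (pd : L → ℝ) (gs : N → ℝ) (b : E → ℝ)
    (pmin pmax : G → ℝ) (Δmin Δmax : E → ℝ) (Smax : E → ℝ)
    (c : G → ℝ) (cφ : ℝ)
    (pg : G → ℝ) (pf : E → ℝ) (θ : N → ℝ) (φ : N → ℝ)
    (lam : N → ℝ) (lampf : E → ℝ) (ν : ℝ)
    (μθl μθu μpfl μpfu : E → ℝ) (μpgl μpgu : G → ℝ)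
    (hprimal : DCFeasible src dst busG busL r pd gs b pmin pmax Δmin Δmax Smax pg pf θ φ)
    (hdual : DCDualFeasible src dst busG r b c cφ lam lampf ν μθl μθu μpfl μpfu μpgl μpgu) :
    DCDualObj busL pd gs pmin pmax Δmin Δmax Smax lam μθl μθu μpfl μpfu μpgl μpgu
      ≤ DCObj c cφ pg φ := by
  obtain ⟨hbal, hpfθ, hΔ, hS, hθr, hpgb⟩ := hprimal
  obtain ⟨hμθl, hμθu, hμpfl, hμpfu, hμpgl, hμpgu, hlam, hgen, hbr, hstat⟩ := hdual
  -- E1: first dual sum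
  have E1 : (∑ i : N, lam i * ((∑ l ∈ univ.filter (fun l => busL l = i), pd l) + gs i))
      = (∑ g : G, lam (busG g) * pg g) - (∑ e : E, lam (src e) * pf e)
        + (∑ e : E, lam (dst e) * pf e) + (∑ i : N, lam i * φ i) := by
    have : ∀ i : N, lam i * ((∑ l ∈ univ.filter (fun l => busL l = i), pd l) + gs i)
        = lam i * (∑ g ∈ univ.filter (fun g => busG g = i), pg g)
          - lam i * (∑ e ∈ univ.filter (fun e => src e = i), pf e)
          + lam i * (∑ e ∈ univ.filter (fun e => dst e = i), pf e)
          + lam i * φ i := by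
      intro i
      rw [← hbal i]; ring
    rw [Finset.sum_congr rfl (fun i _ => this i)]
    simp only [Finset.sum_add_distrib, Finset.sum_sub_distrib]
    rw [dcopf_fib busG lam pg, dcopf_fib src lam pf, dcopf_fib dst lam pf]
  have E2 : (∑ i : N, lam i * φ i) = cφ * (∑ i : N, φ i) := by
    rw [Finset.mul_sum]
    exact Finset.sum_congr rfl fun i _ => by rw [hlam i]
  have E3 : (∑ g : G, c g * pg g)
      = (∑ g : G, lam (busG g) * pg g) + (∑ g : G, μpgl g * pg g)
        - (∑ g : G, μpgu g * pg g) := by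
    rw [← Finset.sum_add_distrib, ← Finset.sum_sub_distrib]
    exact Finset.sum_congr rfl fun g _ => by linear_combination pg g * hgen g
  have E4 : (∑ e : E, lam (src e) * pf e) - (∑ e : E, lam (dst e) * pf e)
      + (∑ e : E, lampf e * pf e) - (∑ e : E, μpfl e * pf e)
      + (∑ e : E, μpfu e * pf e) = 0 := by
    rw [← Finset.sum_sub_distrib, ← Finset.sum_add_distrib, ← Finset.sum_sub_distrib,
      ← Finset.sum_add_distrib]
    rw [Finset.sum_eq_zero]
    intro e _
    linear_combination pf e * hbr e
  have E5 : (∑ e : E, lampf e * pf e)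
      = - ∑ e : E, b e * lampf e * (θ (src e) - θ (dst e)) := by
    rw [← Finset.sum_neg_distrib]
    exact Finset.sum_congr rfl fun e _ => by rw [hpfθ e]; ring
  -- stationarity times θ
  have E6 : (∑ e : E, b e * lampf e * (θ (src e) - θ (dst e)))
      - (∑ e : E, μθl e * (θ (src e) - θ (dst e)))
      + (∑ e : E, μθu e * (θ (src e) - θ (dst e))) = 0 := by
    have h0 : (∑ k : N, θ k * (∑ e ∈ univ.filter (fun e => src e = k), (b e * lampf e - μθl e + μθu e)))
        + (∑ k : N, θ k * (∑ e ∈ univ.filter (fun e => dst e = k), (- b e * lampf e + μθl e - μθu e)))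
        + (∑ k : N, θ k * (if k = r then ν else 0)) = 0 := by
      rw [← Finset.sum_add_distrib, ← Finset.sum_add_distrib, Finset.sum_eq_zero]
      intro k _
      linear_combination θ k * hstat k
    rw [dcopf_fib src θ (fun e => b e * lampf e - μθl e + μθu e),
      dcopf_fib dst θ (fun e => - b e * lampf e + μθl e - μθu e)] at h0
    have hite : (∑ k : N, θ k * (if k = r then ν else 0)) = 0 := by
      simp [mul_ite, mul_zero, hθr]
    rw [hite, add_zero] at h0
    have hcomb : (∑ e : E, θ (src e) * (b e * lampf e - μθl e + μθu e))
        + (∑ e : E, θ (dst e) * (- b e * lampf e + μθl e - μθu e))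
        = (∑ e : E, b e * lampf e * (θ (src e) - θ (dst e)))
          - (∑ e : E, μθl e * (θ (src e) - θ (dst e)))
          + (∑ e : E, μθu e * (θ (src e) - θ (dst e))) := by
      rw [← Finset.sum_add_distrib, ← Finset.sum_sub_distrib, ← Finset.sum_add_distrib]
      exact Finset.sum_congr rfl fun e _ => by ring
    rw [hcomb] at h0
    exact h0
  -- decompose dual objective pieces
  have D2 : (∑ e : E, (μθl e * Δmin e - μθu e * Δmax e))
      = (∑ e : E, μθl e * Δmin e) - (∑ e : E, μθu e * Δmax e) :=
    Finset.sum_sub_distrib _ _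
  have D3 : (∑ e : E, Smax e * (μpfl e + μpfu e))
      = (∑ e : E, μpfl e * Smax e) + (∑ e : E, μpfu e * Smax e) := by
    rw [← Finset.sum_add_distrib]
    exact Finset.sum_congr rfl fun e _ => by ring
  have D4 : (∑ g : G, (μpgl g * pmin g - μpgu g * pmax g))
      = (∑ g : G, μpgl g * pmin g) - (∑ g : G, μpgu g * pmax g) :=
    Finset.sum_sub_distrib _ _
  -- nonnegative slack sums
  have P1 : 0 ≤ (∑ g : G, μpgl g * pg g) - (∑ g : G, μpgl g * pmin g) := by
    rw [← Finset.sum_sub_distrib]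
    refine Finset.sum_nonneg fun g _ => ?_
    have := (hpgb g).1
    nlinarith [hμpgl g]
  have P2 : 0 ≤ (∑ g : G, μpgu g * pmax g) - (∑ g : G, μpgu g * pg g) := by
    rw [← Finset.sum_sub_distrib]
    refine Finset.sum_nonneg fun g _ => ?_
    have := (hpgb g).2
    nlinarith [hμpgu g]
  have P3 : 0 ≤ (∑ e : E, μθl e * (θ (src e) - θ (dst e))) - (∑ e : E, μθl e * Δmin e) := by
    rw [← Finset.sum_sub_distrib]
    refine Finset.sum_nonneg fun e _ => ?_
    have := (hΔ e).1
    nlinarith [hμθl e]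
  have P4 : 0 ≤ (∑ e : E, μθu e * Δmax e) - (∑ e : E, μθu e * (θ (src e) - θ (dst e))) := by
    rw [← Finset.sum_sub_distrib]
    refine Finset.sum_nonneg fun e _ => ?_
    have := (hΔ e).2
    nlinarith [hμθu e]
  have P5 : 0 ≤ (∑ e : E, μpfl e * pf e) + (∑ e : E, μpfl e * Smax e) := by
    rw [← Finset.sum_add_distrib]
    refine Finset.sum_nonneg fun e _ => ?_
    have := (hS e).1
    nlinarith [hμpfl e]
  have P6 : 0 ≤ (∑ e : E, μpfu e * Smax e) - (∑ e : E, μpfu e * pf e) := by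
    rw [← Finset.sum_sub_distrib]
    refine Finset.sum_nonneg fun e _ => ?_
    have := (hS e).2
    nlinarith [hμpfu e]
  unfold DCDualObj DCObj
  rw [E1, D2, D3, D4]
  linarith [E2, E3, E4, E5, E6, P1, P2, P3, P4, P5, P6]
end

section
/- Complementary slackness characterizes zero duality gap for DC-OPF: given a DC-feasible primal point (p^g, p^f, θ, φ) and a dual-feasible point (λ, λ^pf, ν, μ̲^θ, μ̄^θ, μ̲^pf, μ̄^pf, μ̲^pg, μ̄^pg), the primal and dual objectives are equal, J(p^g, φ) = D, if and only if all of the following hold: for every generator g, μ̲^pg(g)·(p^g(g) − p̲(g)) = 0 and μ̄^pg(g)·(p̄(g) − p^g(g)) = 0; for every branch e, μ̲^pf(e)·(p^f(e) + S̄(e)) = 0, μ̄^pf(e)·(S̄(e) − p^f(e)) = 0, μ̲^θ(e)·((θ(src e) − θ(dst e)) − Δ̲(e)) = 0, and μ̄^θ(e)·(Δ̄(e) − (θ(src e) − θ(dst e))) = 0. -/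
open Finset

section AuxDCOPF
open Finset
variable {α N : Type*} [Fintype α] [Fintype N] [DecidableEq N]

lemma dcopf_fib_s5 (m : α → N) (f : α → ℝ) :
    ∑ k : N, ∑ a ∈ univ.filter (fun a => m a = k), f a = ∑ a : α, f a :=
  Finset.sum_fiberwise _ _ _

lemma dcopf_fibw (m : α → N) (w : N → ℝ) (f : α → ℝ) :
    ∑ k : N, w k * ∑ a ∈ univ.filter (fun a => m a = k), f a
      = ∑ a : α, w (m a) * f a := by
  rw [← dcopf_fib_s5 m (fun a => w (m a) * f a)]
  refine Finset.sum_congr rfl fun k _ => ?_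
  rw [Finset.mul_sum]
  exact Finset.sum_congr rfl fun a ha => by rw [(Finset.mem_filter.mp ha).2]

end AuxDCOPF

/-- complementary slackness characterizes zero duality gap for DC-OPF. -/
theorem dcopf_zero_gap_iff_comp_slack
    {N E G L : Type*} [Fintype N] [Fintype E] [Fintype G] [Fintype L] [DecidableEq N]
    (src dst : E → N) (busG : G → N) (busL : L → N) (r : N)
    (pd : L → ℝ) (gs : N → ℝ) (b : E → ℝ)
    (pmin pmax : G → ℝ) (Δmin Δmax : E → ℝ) (Smax : E → ℝ)
    (c : G → ℝ) (cφ : ℝ)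
    (pg : G → ℝ) (pf : E → ℝ) (θ : N → ℝ) (φ : N → ℝ)
    (lam : N → ℝ) (lampf : E → ℝ) (ν : ℝ)
    (μθl μθu μpfl μpfu : E → ℝ) (μpgl μpgu : G → ℝ)
    (hprimal : DCFeasible src dst busG busL r pd gs b pmin pmax Δmin Δmax Smax pg pf θ φ)
    (hdual : DCDualFeasible src dst busG r b c cφ lam lampf ν μθl μθu μpfl μpfu μpgl μpgu) :
    DCObj c cφ pg φ
        = DCDualObj busL pd gs pmin pmax Δmin Δmax Smax lam μθl μθu μpfl μpfu μpgl μpgu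
      ↔ DCCompSlack src dst pmin pmax Δmin Δmax Smax pg pf θ μθl μθu μpfl μpfu μpgl μpgu := by
  obtain ⟨hbal, hpfdef, hΔ, hS, hθr, hpgb⟩ := hprimal
  obtain ⟨hθl0, hθu0, hpfl0, hpfu0, hpgl0, hpgu0, hlam, hgen, hedge, hkcl⟩ := hdual
  -- e1 : value of the λ-part of the dual objective
  have e1 : ∑ i : N, lam i * ((∑ l ∈ univ.filter (fun l => busL l = i), pd l) + gs i)
      = cφ * (∑ g : G, pg g) + cφ * ∑ i : N, φ i := by
    have hterm : ∀ i : N, lam i * ((∑ l ∈ univ.filter (fun l => busL l = i), pd l) + gs i)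
        = cφ * (∑ g ∈ univ.filter (fun g => busG g = i), pg g)
          - cφ * (∑ e ∈ univ.filter (fun e => src e = i), pf e)
          + cφ * (∑ e ∈ univ.filter (fun e => dst e = i), pf e)
          + cφ * φ i := by
      intro i
      rw [hlam i, ← hbal i]; ring
    rw [Finset.sum_congr rfl (fun i _ => hterm i), Finset.sum_add_distrib,
      Finset.sum_add_distrib, Finset.sum_sub_distrib,
      ← Finset.mul_sum, ← Finset.mul_sum, ← Finset.mul_sum, ← Finset.mul_sum,
      dcopf_fib_s5 busG pg, dcopf_fib_s5 src pf, dcopf_fib_s5 dst pf]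
    ring
  -- e2 : expand generator costs using dual stationarity
  have e2 : ∑ g : G, c g * pg g
      = cφ * (∑ g : G, pg g) + ∑ g : G, (μpgl g - μpgu g) * pg g := by
    have hc : ∀ g : G, c g = cφ + μpgl g - μpgu g := by
      intro g
      have h := hgen g
      rw [hlam (busG g)] at h
      linarith
    calc ∑ g : G, c g * pg g
        = ∑ g : G, (cφ * pg g + (μpgl g - μpgu g) * pg g) :=
          Finset.sum_congr rfl fun g _ => by rw [hc g]; ring
      _ = _ := by rw [Finset.sum_add_distrib, ← Finset.mul_sum]
  -- e3 : the flow/angle cross terms vanish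
  have e3 : ∑ e : E, ((μpfl e - μpfu e) * pf e
      + (μθl e - μθu e) * (θ (src e) - θ (dst e))) = 0 := by
    have hlpf : ∀ e : E, lampf e = μpfl e - μpfu e := by
      intro e
      have h := hedge e
      rw [hlam (src e), hlam (dst e)] at h
      linarith
    have hw2 : ∑ e : E,
        (θ (src e) - θ (dst e)) * (b e * lampf e - μθl e + μθu e) = 0 := by
      have hsum0 : ∑ k : N,
          (θ k * (∑ e ∈ univ.filter (fun e => src e = k), (b e * lampf e - μθl e + μθu e))
           + θ k * (∑ e ∈ univ.filter (fun e => dst e = k), (- b e * lampf e + μθl e - μθu e))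
           + θ k * (if k = r then ν else 0)) = 0 := by
        refine Finset.sum_eq_zero fun k _ => ?_
        have h := hkcl k
        calc θ k * (∑ e ∈ univ.filter (fun e => src e = k), (b e * lampf e - μθl e + μθu e))
              + θ k * (∑ e ∈ univ.filter (fun e => dst e = k), (- b e * lampf e + μθl e - μθu e))
              + θ k * (if k = r then ν else 0)
            = θ k * ((∑ e ∈ univ.filter (fun e => src e = k), (b e * lampf e - μθl e + μθu e))
                + (∑ e ∈ univ.filter (fun e => dst e = k), (- b e * lampf e + μθl e - μθu e))
                + (if k = r then ν else 0)) := by ring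
          _ = 0 := by rw [h, mul_zero]
      rw [Finset.sum_add_distrib, Finset.sum_add_distrib,
        dcopf_fibw src θ (fun e => b e * lampf e - μθl e + μθu e),
        dcopf_fibw dst θ (fun e => - b e * lampf e + μθl e - μθu e)] at hsum0
      have hite : ∑ k : N, θ k * (if k = r then ν else 0) = 0 := by
        have : ∀ k : N, θ k * (if k = r then ν else 0) = if k = r then θ k * ν else 0 := by
          intro k; split <;> simp
        rw [Finset.sum_congr rfl (fun k _ => this k), Finset.sum_ite_eq' univ r (fun k => θ k * ν)]
        simp [hθr]
      rw [hite, add_zero, ← Finset.sum_add_distrib] at hsum0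
      calc ∑ e : E, (θ (src e) - θ (dst e)) * (b e * lampf e - μθl e + μθu e)
          = ∑ e : E, (θ (src e) * (b e * lampf e - μθl e + μθu e)
              + θ (dst e) * (- b e * lampf e + μθl e - μθu e)) :=
            Finset.sum_congr rfl fun e _ => by ring
        _ = 0 := hsum0
    calc ∑ e : E, ((μpfl e - μpfu e) * pf e + (μθl e - μθu e) * (θ (src e) - θ (dst e)))
        = ∑ e : E, (-((θ (src e) - θ (dst e)) * (b e * lampf e - μθl e + μθu e))) :=
          Finset.sum_congr rfl fun e _ => by rw [← hlpf e, hpfdef e]; ring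
      _ = -(∑ e : E, (θ (src e) - θ (dst e)) * (b e * lampf e - μθl e + μθu e)) := by
          rw [Finset.sum_neg_distrib]
      _ = 0 := by rw [hw2, neg_zero]
  -- the key gap identity
  have key : DCObj c cφ pg φ
      - DCDualObj busL pd gs pmin pmax Δmin Δmax Smax lam μθl μθu μpfl μpfu μpgl μpgu
      = (∑ g : G, (μpgl g * (pg g - pmin g) + μpgu g * (pmax g - pg g)))
        + ∑ e : E, (μpfl e * (pf e + Smax e) + μpfu e * (Smax e - pf e)
            + μθl e * ((θ (src e) - θ (dst e)) - Δmin e)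
            + μθu e * (Δmax e - (θ (src e) - θ (dst e)))) := by
    have hGsplit : ∑ g : G, (μpgl g * (pg g - pmin g) + μpgu g * (pmax g - pg g))
        = (∑ g : G, (μpgl g - μpgu g) * pg g)
          - ∑ g : G, (μpgl g * pmin g - μpgu g * pmax g) := by
      rw [← Finset.sum_sub_distrib]
      exact Finset.sum_congr rfl fun g _ => by ring
    have hEsplit : ∑ e : E, (μpfl e * (pf e + Smax e) + μpfu e * (Smax e - pf e)
            + μθl e * ((θ (src e) - θ (dst e)) - Δmin e)
            + μθu e * (Δmax e - (θ (src e) - θ (dst e))))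
        = (∑ e : E, Smax e * (μpfl e + μpfu e))
          - (∑ e : E, (μθl e * Δmin e - μθu e * Δmax e))
          + ∑ e : E, ((μpfl e - μpfu e) * pf e
              + (μθl e - μθu e) * (θ (src e) - θ (dst e))) := by
      rw [← Finset.sum_sub_distrib, ← Finset.sum_add_distrib]
      exact Finset.sum_congr rfl fun e _ => by ring
    unfold DCObj DCDualObj
    rw [e1, e2, hGsplit, hEsplit, e3]
    ring
  -- nonnegativity of all slack products
  have hg1 : ∀ g : G, 0 ≤ μpgl g * (pg g - pmin g) :=
    fun g => mul_nonneg (hpgl0 g) (by linarith [(hpgb g).1])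
  have hg2 : ∀ g : G, 0 ≤ μpgu g * (pmax g - pg g) :=
    fun g => mul_nonneg (hpgu0 g) (by linarith [(hpgb g).2])
  have he1 : ∀ e : E, 0 ≤ μpfl e * (pf e + Smax e) :=
    fun e => mul_nonneg (hpfl0 e) (by linarith [(hS e).1])
  have he2 : ∀ e : E, 0 ≤ μpfu e * (Smax e - pf e) :=
    fun e => mul_nonneg (hpfu0 e) (by linarith [(hS e).2])
  have he3 : ∀ e : E, 0 ≤ μθl e * ((θ (src e) - θ (dst e)) - Δmin e) :=
    fun e => mul_nonneg (hθl0 e) (by linarith [(hΔ e).1])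
  have he4 : ∀ e : E, 0 ≤ μθu e * (Δmax e - (θ (src e) - θ (dst e))) :=
    fun e => mul_nonneg (hθu0 e) (by linarith [(hΔ e).2])
  constructor
  · intro h
    have hsum : (∑ g : G, (μpgl g * (pg g - pmin g) + μpgu g * (pmax g - pg g)))
        + ∑ e : E, (μpfl e * (pf e + Smax e) + μpfu e * (Smax e - pf e)
            + μθl e * ((θ (src e) - θ (dst e)) - Δmin e)
            + μθu e * (Δmax e - (θ (src e) - θ (dst e)))) = 0 := by
      rw [← key, h]; ring
    have hGnn : 0 ≤ ∑ g : G, (μpgl g * (pg g - pmin g) + μpgu g * (pmax g - pg g)) :=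
      Finset.sum_nonneg fun g _ => by have := hg1 g; have := hg2 g; linarith
    have hEnn : 0 ≤ ∑ e : E, (μpfl e * (pf e + Smax e) + μpfu e * (Smax e - pf e)
            + μθl e * ((θ (src e) - θ (dst e)) - Δmin e)
            + μθu e * (Δmax e - (θ (src e) - θ (dst e)))) :=
      Finset.sum_nonneg fun e _ => by
        have := he1 e; have := he2 e; have := he3 e; have := he4 e; linarith
    have hG0 : ∑ g : G, (μpgl g * (pg g - pmin g) + μpgu g * (pmax g - pg g)) = 0 := by
      linarith
    have hE0 : ∑ e : E, (μpfl e * (pf e + Smax e) + μpfu e * (Smax e - pf e)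
            + μθl e * ((θ (src e) - θ (dst e)) - Δmin e)
            + μθu e * (Δmax e - (θ (src e) - θ (dst e)))) = 0 := by
      linarith
    have hGall : ∀ g ∈ (univ : Finset G),
        μpgl g * (pg g - pmin g) + μpgu g * (pmax g - pg g) = 0 :=
      (Finset.sum_eq_zero_iff_of_nonneg
        (fun g _ => by have := hg1 g; have := hg2 g; linarith)).mp hG0
    have hEall : ∀ e ∈ (univ : Finset E),
        μpfl e * (pf e + Smax e) + μpfu e * (Smax e - pf e)
          + μθl e * ((θ (src e) - θ (dst e)) - Δmin e)
          + μθu e * (Δmax e - (θ (src e) - θ (dst e))) = 0 :=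
      (Finset.sum_eq_zero_iff_of_nonneg
        (fun e _ => by have := he1 e; have := he2 e; have := he3 e; have := he4 e; linarith)).mp hE0
    refine ⟨fun g => ?_, fun g => ?_, fun e => ?_, fun e => ?_, fun e => ?_, fun e => ?_⟩
    · have h0 := hGall g (Finset.mem_univ g); have := hg1 g; have := hg2 g; linarith
    · have h0 := hGall g (Finset.mem_univ g); have := hg1 g; have := hg2 g; linarith
    · have h0 := hEall e (Finset.mem_univ e)
      have := he1 e; have := he2 e; have := he3 e; have := he4 e; linarith
    · have h0 := hEall e (Finset.mem_univ e)
      have := he1 e; have := he2 e; have := he3 e; have := he4 e; linarith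
    · have h0 := hEall e (Finset.mem_univ e)
      have := he1 e; have := he2 e; have := he3 e; have := he4 e; linarith
    · have h0 := hEall e (Finset.mem_univ e)
      have := he1 e; have := he2 e; have := he3 e; have := he4 e; linarith
  · rintro ⟨h1, h2, h3, h4, h5, h6⟩
    have hG0 : ∑ g : G, (μpgl g * (pg g - pmin g) + μpgu g * (pmax g - pg g)) = 0 :=
      Finset.sum_eq_zero fun g _ => by rw [h1 g, h2 g]; ring
    have hE0 : ∑ e : E, (μpfl e * (pf e + Smax e) + μpfu e * (Smax e - pf e)
            + μθl e * ((θ (src e) - θ (dst e)) - Δmin e)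
            + μθu e * (Δmax e - (θ (src e) - θ (dst e)))) = 0 :=
      Finset.sum_eq_zero fun e _ => by rw [h3 e, h4 e, h5 e, h6 e]; ring
    have := key
    rw [hG0, hE0] at this
    linarith
end

section
/- KKT sufficiency for DC-OPF: if (p^g*, p^f*, θ*, φ*) is DC-feasible and there exists a dual-feasible point (λ, λ^pf, ν, μ̲^θ, μ̄^θ, μ̲^pf, μ̄^pf, μ̲^pg, μ̄^pg) satisfying complementary slackness with (p^g*, p^f*, θ*, φ*) — namely μ̲^pg(g)·(p^g*(g) − p̲(g)) = 0 and μ̄^pg(g)·(p̄(g) − p^g*(g)) = 0 for every generator g, and μ̲^pf(e)·(p^f*(e) + S̄(e)) = 0, μ̄^pf(e)·(S̄(e) − p^f*(e)) = 0, μ̲^θ(e)·((θ*(src e) − θ*(dst e)) − Δ̲(e)) = 0, μ̄^θ(e)·(Δ̄(e) − (θ*(src e) − θ*(dst e))) = 0 for every branch e — then (p^g*, p^f*, θ*, φ*) is a global minimizer of the DC-OPF: J(p^g*, φ*) ≤ J(p^g, φ) for every DC-feasible point (p^g, p^f, θ, φ). -/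
open Finset

lemma sum_weight_fiber {α β : Type*} [Fintype α] [Fintype β] [DecidableEq β]
    (g : α → β) (w : β → ℝ) (f : α → ℝ) :
    ∑ b : β, w b * ∑ a ∈ univ.filter (fun a => g a = b), f a
      = ∑ a : α, w (g a) * f a := by
  rw [← Finset.sum_fiberwise univ g (fun a => w (g a) * f a)]
  refine Finset.sum_congr rfl fun b _ => ?_
  rw [Finset.mul_sum]
  refine Finset.sum_congr rfl fun a ha => ?_
  rw [(Finset.mem_filter.mp ha).2]

lemma dcopf_obj_identity
    {N E G L : Type*} [Fintype N] [Fintype E] [Fintype G] [Fintype L] [DecidableEq N]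
    (src dst : E → N) (busG : G → N) (busL : L → N) (r : N)
    (pd : L → ℝ) (gs : N → ℝ) (b : E → ℝ)
    (pmin pmax : G → ℝ) (Δmin Δmax : E → ℝ) (Smax : E → ℝ)
    (c : G → ℝ) (cφ : ℝ)
    (pg : G → ℝ) (pf : E → ℝ) (θ : N → ℝ) (φ : N → ℝ)
    (lam : N → ℝ) (lampf : E → ℝ) (ν : ℝ)
    (μθl μθu μpfl μpfu : E → ℝ) (μpgl μpgu : G → ℝ)
    (hbal : ∀ i : N,
      (∑ g ∈ univ.filter (fun g => busG g = i), pg g)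
        - (∑ e ∈ univ.filter (fun e => src e = i), pf e)
        + (∑ e ∈ univ.filter (fun e => dst e = i), pf e)
        + φ i
      = (∑ l ∈ univ.filter (fun l => busL l = i), pd l) + gs i)
    (hflow : ∀ e : E, pf e = - b e * (θ (src e) - θ (dst e)))
    (href : θ r = 0)
    (hlam : ∀ i : N, lam i = cφ)
    (hstatg : ∀ g : G, c g - lam (busG g) - μpgl g + μpgu g = 0)
    (hstate : ∀ e : E, lam (src e) - lam (dst e) + lampf e - μpfl e + μpfu e = 0)
    (hstatθ : ∀ k : N,
      (∑ e ∈ univ.filter (fun e => src e = k), (b e * lampf e - μθl e + μθu e))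
        + (∑ e ∈ univ.filter (fun e => dst e = k), (- b e * lampf e + μθl e - μθu e))
        + (if k = r then ν else 0) = 0) :
    cφ * (∑ i : N, φ i) + ∑ g : G, c g * pg g
      = ((∑ i : N, lam i * ((∑ l ∈ univ.filter (fun l => busL l = i), pd l) + gs i))
          + (∑ e : E, (μθl e * Δmin e - μθu e * Δmax e))
          - (∑ e : E, Smax e * (μpfl e + μpfu e))
          + (∑ g : G, (μpgl g * pmin g - μpgu g * pmax g)))
        + (∑ e : E, μθl e * ((θ (src e) - θ (dst e)) - Δmin e))
        + (∑ e : E, μθu e * (Δmax e - (θ (src e) - θ (dst e))))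
        + (∑ e : E, μpfl e * (pf e + Smax e))
        + (∑ e : E, μpfu e * (Smax e - pf e))
        + (∑ g : G, μpgl g * (pg g - pmin g))
        + (∑ g : G, μpgu g * (pmax g - pg g)) := by
  -- weighted power balance
  have hA : ∑ i : N, lam i *
      ((∑ g ∈ univ.filter (fun g => busG g = i), pg g)
        - (∑ e ∈ univ.filter (fun e => src e = i), pf e)
        + (∑ e ∈ univ.filter (fun e => dst e = i), pf e)
        + φ i)
      = ∑ i : N, lam i * ((∑ l ∈ univ.filter (fun l => busL l = i), pd l) + gs i) :=
    Finset.sum_congr rfl fun i _ => by rw [hbal i]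
  have hA' : (∑ g : G, lam (busG g) * pg g) - (∑ e : E, lam (src e) * pf e)
      + (∑ e : E, lam (dst e) * pf e) + (∑ i : N, lam i * φ i)
      = ∑ i : N, lam i * ((∑ l ∈ univ.filter (fun l => busL l = i), pd l) + gs i) := by
    rw [← hA, ← sum_weight_fiber busG lam pg, ← sum_weight_fiber src lam pf,
      ← sum_weight_fiber dst lam pf, ← Finset.sum_sub_distrib, ← Finset.sum_add_distrib,
      ← Finset.sum_add_distrib]
    exact Finset.sum_congr rfl fun i _ => by ring
  -- weighted θ-stationarity
  have hB : ∑ k : N, θ k *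
      ((∑ e ∈ univ.filter (fun e => src e = k), (b e * lampf e - μθl e + μθu e))
        + (∑ e ∈ univ.filter (fun e => dst e = k), (- b e * lampf e + μθl e - μθu e))
        + (if k = r then ν else 0)) = 0 :=
    Finset.sum_eq_zero fun k _ => by rw [hstatθ k, mul_zero]
  have hB' : (∑ e : E, θ (src e) * (b e * lampf e - μθl e + μθu e))
      + (∑ e : E, θ (dst e) * (- b e * lampf e + μθl e - μθu e)) = 0 := by
    have hite : ∑ k : N, θ k * (if k = r then ν else 0) = 0 := by
      simp [mul_ite, Finset.sum_ite_eq', href]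
    have h1 := sum_weight_fiber src θ (fun e => b e * lampf e - μθl e + μθu e)
    have h2 := sum_weight_fiber dst θ (fun e => - b e * lampf e + μθl e - μθu e)
    have hB2 : (∑ k : N, θ k * ∑ e ∈ univ.filter (fun e => src e = k),
          (b e * lampf e - μθl e + μθu e))
        + (∑ k : N, θ k * ∑ e ∈ univ.filter (fun e => dst e = k),
          (- b e * lampf e + μθl e - μθu e))
        + (∑ k : N, θ k * (if k = r then ν else 0)) = 0 := by
      rw [← Finset.sum_add_distrib, ← Finset.sum_add_distrib]
      rw [show (∑ k : N, (θ k * (∑ e ∈ univ.filter (fun e => src e = k),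
            (b e * lampf e - μθl e + μθu e))
          + θ k * (∑ e ∈ univ.filter (fun e => dst e = k),
            (- b e * lampf e + μθl e - μθu e))
          + θ k * (if k = r then ν else 0)))
          = ∑ k : N, θ k * ((∑ e ∈ univ.filter (fun e => src e = k),
            (b e * lampf e - μθl e + μθu e))
          + (∑ e ∈ univ.filter (fun e => dst e = k),
            (- b e * lampf e + μθl e - μθu e))
          + (if k = r then ν else 0))
        from Finset.sum_congr rfl fun k _ => by ring]
      exact hB
    rw [← h1, ← h2]
    linarith [hB2, hite]
  -- gen stationarity summed
  have hC : ∑ g : G, c g * pg g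
      = ∑ g : G, (lam (busG g) * pg g + μpgl g * pg g - μpgu g * pg g) :=
    Finset.sum_congr rfl fun g _ => by linear_combination pg g * hstatg g
  -- edge stationarity summed
  have hD : ∑ e : E, (lam (src e) * pf e - lam (dst e) * pf e + lampf e * pf e
      - μpfl e * pf e + μpfu e * pf e) = 0 :=
    Finset.sum_eq_zero fun e _ => by linear_combination pf e * hstate e
  -- flow equation summed against lampf
  have hE : ∑ e : E, lampf e * pf e
      = ∑ e : E, lampf e * (- b e * (θ (src e) - θ (dst e))) :=
    Finset.sum_congr rfl fun e _ => by rw [hflow e]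
  -- lam = cφ
  have hF : ∑ i : N, lam i * φ i = cφ * ∑ i : N, φ i := by
    rw [Finset.mul_sum]; exact Finset.sum_congr rfl fun i _ => by rw [hlam i]
  -- now pure linear algebra over sums; atomize everything
  simp only [mul_add, add_mul, mul_sub, sub_mul, mul_neg, neg_mul, neg_neg, neg_sub,
    Finset.sum_add_distrib, Finset.sum_sub_distrib, Finset.sum_neg_distrib] at hA' hB' hC hD hE ⊢
  simp only [mul_comm, mul_left_comm, mul_assoc] at hA' hB' hC hD hE hF ⊢
  linarith [hA', hB', hC, hD, hE, hF]

/-- KKT sufficiency for DC-OPF. -/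
theorem dcopf_kkt_sufficient
    {N E G L : Type*} [Fintype N] [Fintype E] [Fintype G] [Fintype L] [DecidableEq N]
    (src dst : E → N) (busG : G → N) (busL : L → N) (r : N)
    (pd : L → ℝ) (gs : N → ℝ) (b : E → ℝ)
    (pmin pmax : G → ℝ) (Δmin Δmax : E → ℝ) (Smax : E → ℝ)
    (c : G → ℝ) (cφ : ℝ)
    (pgs : G → ℝ) (pfs : E → ℝ) (θs : N → ℝ) (φs : N → ℝ)
    (hprimal : DCFeasible src dst busG busL r pd gs b pmin pmax Δmin Δmax Smax pgs pfs θs φs)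
    (hdual : ∃ (lam : N → ℝ) (lampf : E → ℝ) (ν : ℝ)
        (μθl μθu μpfl μpfu : E → ℝ) (μpgl μpgu : G → ℝ),
      DCDualFeasible src dst busG r b c cφ lam lampf ν μθl μθu μpfl μpfu μpgl μpgu
      ∧ DCCompSlack src dst pmin pmax Δmin Δmax Smax pgs pfs θs μθl μθu μpfl μpfu μpgl μpgu) :
    ∀ (pg : G → ℝ) (pf : E → ℝ) (θ : N → ℝ) (φ : N → ℝ),
      DCFeasible src dst busG busL r pd gs b pmin pmax Δmin Δmax Smax pg pf θ φ →
      DCObj c cφ pgs φs ≤ DCObj c cφ pg φ := by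
  obtain ⟨lam, lampf, ν, μθl, μθu, μpfl, μpfu, μpgl, μpgu, hdf, hcs⟩ := hdual
  obtain ⟨hθl0, hθu0, hpfl0, hpfu0, hpgl0, hpgu0, hlam, hstatg, hstate, hstatθ⟩ := hdf
  obtain ⟨hcs1, hcs2, hcs3, hcs4, hcs5, hcs6⟩ := hcs
  obtain ⟨hbal_s, hflow_s, hΔ_s, hS_s, href_s, hpg_s⟩ := hprimal
  intro pg pf θ φ hfeas
  obtain ⟨hbal, hflow, hΔ, hS, href, hpg⟩ := hfeas
  have hid := dcopf_obj_identity src dst busG busL r pd gs b pmin pmax Δmin Δmax Smax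
    c cφ pg pf θ φ lam lampf ν μθl μθu μpfl μpfu μpgl μpgu
    hbal hflow href hlam hstatg hstate hstatθ
  have hid_s := dcopf_obj_identity src dst busG busL r pd gs b pmin pmax Δmin Δmax Smax
    c cφ pgs pfs θs φs lam lampf ν μθl μθu μpfl μpfu μpgl μpgu
    hbal_s hflow_s href_s hlam hstatg hstate hstatθ
  have z1 : (∑ e : E, μθl e * ((θs (src e) - θs (dst e)) - Δmin e)) = 0 :=
    Finset.sum_eq_zero fun e _ => hcs5 e
  have z2 : (∑ e : E, μθu e * (Δmax e - (θs (src e) - θs (dst e)))) = 0 :=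
    Finset.sum_eq_zero fun e _ => hcs6 e
  have z3 : (∑ e : E, μpfl e * (pfs e + Smax e)) = 0 :=
    Finset.sum_eq_zero fun e _ => hcs3 e
  have z4 : (∑ e : E, μpfu e * (Smax e - pfs e)) = 0 :=
    Finset.sum_eq_zero fun e _ => hcs4 e
  have z5 : (∑ g : G, μpgl g * (pgs g - pmin g)) = 0 :=
    Finset.sum_eq_zero fun g _ => hcs1 g
  have z6 : (∑ g : G, μpgu g * (pmax g - pgs g)) = 0 :=
    Finset.sum_eq_zero fun g _ => hcs2 g
  have n1 : 0 ≤ ∑ e : E, μθl e * ((θ (src e) - θ (dst e)) - Δmin e) :=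
    Finset.sum_nonneg fun e _ => mul_nonneg (hθl0 e) (by linarith [(hΔ e).1])
  have n2 : 0 ≤ ∑ e : E, μθu e * (Δmax e - (θ (src e) - θ (dst e))) :=
    Finset.sum_nonneg fun e _ => mul_nonneg (hθu0 e) (by linarith [(hΔ e).2])
  have n3 : 0 ≤ ∑ e : E, μpfl e * (pf e + Smax e) :=
    Finset.sum_nonneg fun e _ => mul_nonneg (hpfl0 e) (by linarith [(hS e).1])
  have n4 : 0 ≤ ∑ e : E, μpfu e * (Smax e - pf e) :=
    Finset.sum_nonneg fun e _ => mul_nonneg (hpfu0 e) (by linarith [(hS e).2])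
  have n5 : 0 ≤ ∑ g : G, μpgl g * (pg g - pmin g) :=
    Finset.sum_nonneg fun g _ => mul_nonneg (hpgl0 g) (by linarith [(hpg g).1])
  have n6 : 0 ≤ ∑ g : G, μpgu g * (pmax g - pg g) :=
    Finset.sum_nonneg fun g _ => mul_nonneg (hpgu0 g) (by linarith [(hpg g).2])
  simp only [DCObj]
  linarith [hid, hid_s]
end

section
/- Strong duality / KKT necessity for DC-OPF: if (p^g*, p^f*, θ*, φ*) is a DC-feasible point minimizing the objective J over the DC-feasible set, then there exists a dual-feasible point (λ, λ^pf, ν, μ̲^θ, μ̄^θ, μ̲^pf, μ̄^pf, μ̲^pg, μ̄^pg) whose dual objective equals the optimal primal value, D = J(p^g*, φ*); equivalently, there exist Lagrange multipliers satisfying, together with (p^g*, p^f*, θ*, φ*), the full KKT system of the DC-OPF linear program (primal feasibility, the stationarity equations (a)–(d), nonnegativity of the μ multipliers, and complementary slackness). -/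
open Finset

/-- Perturbation lemma: moving one generator's output to any feasible value `v`
(and absorbing the change into the load shed at its bus) stays feasible, so
optimality forces `0 ≤ (cφ - c g) * (pgs g - v)`. -/
lemma dcopf_gen_perturb
    {N E G L : Type*} [Fintype N] [Fintype E] [Fintype G] [Fintype L] [DecidableEq N]
    (src dst : E → N) (busG : G → N) (busL : L → N) (r : N)
    (pd : L → ℝ) (gs : N → ℝ) (b : E → ℝ)
    (pmin pmax : G → ℝ) (Δmin Δmax : E → ℝ) (Smax : E → ℝ)
    (c : G → ℝ) (cφ : ℝ)
    (pgs : G → ℝ) (pfs : E → ℝ) (θs : N → ℝ) (φs : N → ℝ)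
    (hprimal : DCFeasible src dst busG busL r pd gs b pmin pmax Δmin Δmax Smax pgs pfs θs φs)
    (hopt : ∀ (pg : G → ℝ) (pf : E → ℝ) (θ : N → ℝ) (φ : N → ℝ),
      DCFeasible src dst busG busL r pd gs b pmin pmax Δmin Δmax Smax pg pf θ φ →
      DCObj c cφ pgs φs ≤ DCObj c cφ pg φ)
    [DecidableEq G]
    (g : G) (v : ℝ) (hv1 : pmin g ≤ v) (hv2 : v ≤ pmax g) :
    0 ≤ (cφ - c g) * (pgs g - v) := by
  obtain ⟨hbal, hpf, hθ, hS, hr, hpg⟩ := hprimal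
  set pg' : G → ℝ := Function.update pgs g v with hpg'
  set φ' : N → ℝ := Function.update φs (busG g) (φs (busG g) + (pgs g - v)) with hφ'
  have hsum_other : ∀ i : N, i ≠ busG g →
      ∑ g' ∈ univ.filter (fun g' => busG g' = i), pg' g'
        = ∑ g' ∈ univ.filter (fun g' => busG g' = i), pgs g' := by
    intro i hi
    refine Finset.sum_congr rfl fun g' hg' => ?_
    have : busG g' = i := (Finset.mem_filter.1 hg').2
    have hne : g' ≠ g := fun h => hi (by rw [← this, h])
    simp [hpg', Function.update_of_ne hne]
  have hgmem : g ∈ univ.filter (fun g' => busG g' = busG g) := by simp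
  have hsum_self :
      ∑ g' ∈ univ.filter (fun g' => busG g' = busG g), pg' g'
        = (∑ g' ∈ univ.filter (fun g' => busG g' = busG g), pgs g') - pgs g + v := by
    rw [hpg', Finset.sum_update_of_mem hgmem, Finset.sdiff_singleton_eq_erase,
      Finset.sum_erase_eq_sub hgmem]
    ring
  have hfeas : DCFeasible src dst busG busL r pd gs b pmin pmax Δmin Δmax Smax pg' pfs θs φ' := by
    refine ⟨?_, hpf, hθ, hS, hr, ?_⟩
    · intro i
      by_cases hi : i = busG g
      · subst hi
        have hb := hbal (busG g)
        rw [hsum_self]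
        simp only [hφ', Function.update_self]
        linarith
      · have hb := hbal i
        rw [hsum_other i hi]
        simp only [hφ', Function.update_of_ne hi]
        linarith
    · intro g'
      by_cases hg' : g' = g
      · subst hg'; simp [hpg', hv1, hv2]
      · simp [hpg', Function.update_of_ne hg', hpg g']
  have hle := hopt pg' pfs θs φ' hfeas
  have hφsum : ∑ i : N, φ' i = (∑ i : N, φs i) + (pgs g - v) := by
    rw [hφ', Finset.sum_update_of_mem (Finset.mem_univ _), Finset.sdiff_singleton_eq_erase,
      Finset.sum_erase_eq_sub (Finset.mem_univ _)]
    ring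
  have hpgsum : ∑ g' : G, c g' * pg' g' = (∑ g' : G, c g' * pgs g') - c g * pgs g + c g * v := by
    rw [← Finset.add_sum_erase _ (fun g' => c g' * pg' g') (Finset.mem_univ g),
      ← Finset.add_sum_erase _ (fun g' => c g' * pgs g') (Finset.mem_univ g)]
    have : ∑ g' ∈ univ.erase g, c g' * pg' g' = ∑ g' ∈ univ.erase g, c g' * pgs g' := by
      refine Finset.sum_congr rfl fun g' hg' => ?_
      have hne : g' ≠ g := (Finset.mem_erase.1 hg').1
      simp [hpg', Function.update_of_ne hne]
    rw [this]
    simp [hpg']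
    ring
  simp only [DCObj] at hle
  rw [hφsum, hpgsum] at hle
  nlinarith [hle]

/-- strong duality / KKT necessity for DC-OPF. -/
theorem dcopf_strong_duality_kkt_necessary
    {N E G L : Type*} [Fintype N] [Fintype E] [Fintype G] [Fintype L] [DecidableEq N]
    (src dst : E → N) (busG : G → N) (busL : L → N) (r : N)
    (pd : L → ℝ) (gs : N → ℝ) (b : E → ℝ)
    (pmin pmax : G → ℝ) (Δmin Δmax : E → ℝ) (Smax : E → ℝ)
    (c : G → ℝ) (cφ : ℝ)
    (pgs : G → ℝ) (pfs : E → ℝ) (θs : N → ℝ) (φs : N → ℝ)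
    (hprimal : DCFeasible src dst busG busL r pd gs b pmin pmax Δmin Δmax Smax pgs pfs θs φs)
    (hopt : ∀ (pg : G → ℝ) (pf : E → ℝ) (θ : N → ℝ) (φ : N → ℝ),
      DCFeasible src dst busG busL r pd gs b pmin pmax Δmin Δmax Smax pg pf θ φ →
      DCObj c cφ pgs φs ≤ DCObj c cφ pg φ) :
    ∃ (lam : N → ℝ) (lampf : E → ℝ) (ν : ℝ)
      (μθl μθu μpfl μpfu : E → ℝ) (μpgl μpgu : G → ℝ),
      DCDualFeasible src dst busG r b c cφ lam lampf ν μθl μθu μpfl μpfu μpgl μpgu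
      ∧ DCDualObj busL pd gs pmin pmax Δmin Δmax Smax lam μθl μθu μpfl μpfu μpgl μpgu
          = DCObj c cφ pgs φs
      ∧ DCCompSlack src dst pmin pmax Δmin Δmax Smax pgs pfs θs μθl μθu μpfl μpfu μpgl μpgu := by
  classical
  have hkey : ∀ (g : G) (v : ℝ), pmin g ≤ v → v ≤ pmax g →
      0 ≤ (cφ - c g) * (pgs g - v) :=
    fun g v h1 h2 => dcopf_gen_perturb src dst busG busL r pd gs b pmin pmax Δmin Δmax Smax
      c cφ pgs pfs θs φs hprimal hopt g v h1 h2
  obtain ⟨hbal, hpfE, hθE, hSE, hrE, hpgE⟩ := hprimal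
  set M1 : G → ℝ := fun g => max (c g - cφ) 0 with hM1
  set M2 : G → ℝ := fun g => max (cφ - c g) 0 with hM2
  -- complementary slackness for generators
  have hcs1 : ∀ g : G, M1 g * (pgs g - pmin g) = 0 := by
    intro g
    rcases le_total (c g) cφ with h | h
    · simp [hM1, max_eq_right (by linarith : c g - cφ ≤ 0)]
    · rw [hM1]
      simp only
      rw [max_eq_left (by linarith : (0:ℝ) ≤ c g - cφ)]
      have h1 := hkey g (pmin g) le_rfl ((hpgE g).1.trans (hpgE g).2)
      have h2 := mul_nonneg (by linarith : (0:ℝ) ≤ c g - cφ)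
        (by linarith [(hpgE g).1] : (0:ℝ) ≤ pgs g - pmin g)
      nlinarith
  have hcs2 : ∀ g : G, M2 g * (pmax g - pgs g) = 0 := by
    intro g
    rcases le_total cφ (c g) with h | h
    · simp [hM2, max_eq_right (by linarith : cφ - c g ≤ 0)]
    · rw [hM2]
      simp only
      rw [max_eq_left (by linarith : (0:ℝ) ≤ cφ - c g)]
      have h1 := hkey g (pmax g) ((hpgE g).1.trans (hpgE g).2) le_rfl
      have h2 := mul_nonneg (by linarith : (0:ℝ) ≤ cφ - c g)
        (by linarith [(hpgE g).2] : (0:ℝ) ≤ pmax g - pgs g)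
      nlinarith
  have hstat : ∀ g : G, c g - cφ - M1 g + M2 g = 0 := by
    intro g
    rw [hM1, hM2]
    simp only [max_def]
    split_ifs <;> linarith
  refine ⟨fun _ => cφ, fun _ => 0, 0, fun _ => 0, fun _ => 0, fun _ => 0, fun _ => 0,
    M1, M2, ?_, ?_, ?_⟩
  · refine ⟨fun e => le_rfl, fun e => le_rfl, fun e => le_rfl, fun e => le_rfl,
      fun g => le_max_right _ _, fun g => le_max_right _ _, fun i => rfl,
      fun g => by have := hstat g; linarith, fun e => by ring, fun k => by simp⟩
  · -- dual objective equality
    have hfibG : ∑ i : N, ∑ g ∈ univ.filter (fun g => busG g = i), pgs g = ∑ g : G, pgs g :=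
      Finset.sum_fiberwise _ _ _
    have hfibS : ∑ i : N, ∑ e ∈ univ.filter (fun e => src e = i), pfs e = ∑ e : E, pfs e :=
      Finset.sum_fiberwise _ _ _
    have hfibD : ∑ i : N, ∑ e ∈ univ.filter (fun e => dst e = i), pfs e = ∑ e : E, pfs e :=
      Finset.sum_fiberwise _ _ _
    have hsumbal : ∑ i : N, ((∑ l ∈ univ.filter (fun l => busL l = i), pd l) + gs i)
        = (∑ g : G, pgs g) + ∑ i : N, φs i := by
      have : ∑ i : N, ((∑ g ∈ univ.filter (fun g => busG g = i), pgs g)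
            - (∑ e ∈ univ.filter (fun e => src e = i), pfs e)
            + (∑ e ∈ univ.filter (fun e => dst e = i), pfs e) + φs i)
          = ∑ i : N, ((∑ l ∈ univ.filter (fun l => busL l = i), pd l) + gs i) :=
        Finset.sum_congr rfl fun i _ => hbal i
      rw [← this]
      rw [Finset.sum_add_distrib, Finset.sum_add_distrib, Finset.sum_sub_distrib,
        hfibG, hfibS, hfibD]
      ring
    simp only [DCDualObj, DCObj]
    have hterm : ∀ g : G, M1 g * pmin g - M2 g * pmax g = c g * pgs g - cφ * pgs g := by
      intro g
      have h1 := hcs1 g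
      have h2 := hcs2 g
      have h3 := hstat g
      linear_combination -h1 - h2 - pgs g * h3
    rw [← Finset.mul_sum, hsumbal]
    have h4 : ∑ g : G, (M1 g * pmin g - M2 g * pmax g)
        = (∑ g : G, c g * pgs g) - cφ * ∑ g : G, pgs g := by
      rw [Finset.sum_congr rfl fun g _ => hterm g, Finset.sum_sub_distrib, ← Finset.mul_sum]
    rw [h4]
    simp only [zero_mul, mul_zero, sub_zero, zero_sub, add_zero, zero_add, neg_zero,
      Finset.sum_const_zero]
    ring
  · exact ⟨hcs1, fun g => hcs2 g, fun e => by simp, fun e => by simp, fun e => by simp,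
      fun e => by simp⟩
end
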